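/- arXiv:1409.5254 — 4 statements merged into one kernel-verified Lean document; each statement's English description precedes it below -/
import Mathlib

section
/- For the function Ŝ(ω, α, θ)² = (1−ω)² + 2ω(1−ω)α cos(θ) + α²ω² with α ≥ −1, the min over ω ∈ (0,1] of the max over θ ∈ [π/2, π] of Ŝ(ω, α, θ) equals α/√(1+α²) if α ≥ 0, and equals |α| if α < 0; the optimum is attained at ω* = 1/(1+α²), θ* = π/2 when α ≥ 0, and at ω* = 1, θ* = π when α < 0. -/
/-!
For `α ≥ 0` the cross term `2ω(1-ω)α cos θ` is nonpositive on `[π/2, π]`, so the maximum over `θ`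
is attained at `π/2`, where `Ŝ² = (1-ω)² + α²ω²`; the identity
`(1+α²)((1-ω)² + α²ω²) - α² = ((1+α²)ω - 1)²` shows that this quadratic in `ω` is minimal,
with value `α²/(1+α²)`, at `ω = 1/(1+α²)`.
For `-1 ≤ α < 0` the choice `ω = 1` makes `Ŝ ≡ |α|`, while for any `ω` the value at `θ = π` is
`Ŝ = 1 - ω - αω = |α| + (1-ω)(1+α) ≥ |α|`.
-/

open Real Set

noncomputable def smoothingSymbolSq (α ω θ : ℝ) : ℝ :=
  (1 - ω) ^ 2 + 2 * ω * (1 - ω) * α * cos θ + α ^ 2 * ω ^ 2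

lemma smoothingSymbolSq_pi_div_two (α ω : ℝ) :
    smoothingSymbolSq α ω (π / 2) = (1 - ω) ^ 2 + α ^ 2 * ω ^ 2 := by
  simp [smoothingSymbolSq]

lemma smoothingSymbolSq_pi (α ω : ℝ) : smoothingSymbolSq α ω π = (1 - ω - α * ω) ^ 2 := by
  simp only [smoothingSymbolSq, cos_pi]
  ring

lemma smoothingSymbolSq_one (α θ : ℝ) : smoothingSymbolSq α 1 θ = α ^ 2 := by
  simp [smoothingSymbolSq]

lemma smoothingSymbolSq_le_pi_div_two {α ω θ : ℝ} (hα : 0 ≤ α) (hω₀ : 0 ≤ ω) (hω₁ : ω ≤ 1)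
    (hθ : cos θ ≤ 0) : smoothingSymbolSq α ω θ ≤ smoothingSymbolSq α ω (π / 2) := by
  have hcoef : 0 ≤ 2 * ω * (1 - ω) * α := by
    have := sub_nonneg.2 hω₁
    positivity
  rw [smoothingSymbolSq_pi_div_two, smoothingSymbolSq]
  nlinarith [mul_nonpos_of_nonneg_of_nonpos hcoef hθ]

lemma sq_div_one_add_sq_le (α ω : ℝ) : α ^ 2 / (1 + α ^ 2) ≤ (1 - ω) ^ 2 + α ^ 2 * ω ^ 2 := by
  rw [div_le_iff₀ (by positivity)]
  nlinarith [sq_nonneg ((1 + α ^ 2) * ω - 1)]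

lemma sq_div_one_add_sq_eq (α : ℝ) :
    (1 - 1 / (1 + α ^ 2)) ^ 2 + α ^ 2 * (1 / (1 + α ^ 2)) ^ 2 = α ^ 2 / (1 + α ^ 2) := by
  field_simp
  ring

lemma one_div_one_add_sq_mem_Ioc (α : ℝ) : 1 / (1 + α ^ 2) ∈ Ioc (0 : ℝ) 1 :=
  ⟨by positivity, div_le_one_of_le₀ (by nlinarith) (by positivity)⟩

lemma sqrt_sq_div_one_add_sq {α : ℝ} (hα : 0 ≤ α) :
    √(α ^ 2 / (1 + α ^ 2)) = α / √(1 + α ^ 2) := by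
  rw [sqrt_div (sq_nonneg α), sqrt_sq hα]

lemma neg_le_sub_sub_mul {α ω : ℝ} (hα : -1 ≤ α) (hω : ω ≤ 1) : -α ≤ 1 - ω - α * ω := by
  nlinarith [mul_nonneg (sub_nonneg.2 hω) (neg_le_iff_add_nonneg.1 hα)]

lemma pi_div_two_mem_Icc : π / 2 ∈ Icc (π / 2) π := ⟨le_rfl, by linarith [pi_pos]⟩

lemma pi_mem_Icc : π ∈ Icc (π / 2) π := ⟨by linarith [pi_pos], le_rfl⟩

theorem smoother_minmax_of_nonneg {α : ℝ} (hα : 0 ≤ α) :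
    IsGreatest ((fun θ ↦ √(smoothingSymbolSq α (1 / (1 + α ^ 2)) θ)) '' Icc (π / 2) π)
        (√(smoothingSymbolSq α (1 / (1 + α ^ 2)) (π / 2))) ∧
      √(smoothingSymbolSq α (1 / (1 + α ^ 2)) (π / 2)) = α / √(1 + α ^ 2) ∧
      ∀ ω, α / √(1 + α ^ 2) ≤ √(smoothingSymbolSq α ω (π / 2)) := by
  obtain ⟨hω₀, hω₁⟩ := one_div_one_add_sq_mem_Ioc α
  refine ⟨⟨mem_image_of_mem _ pi_div_two_mem_Icc, forall_mem_image.2 fun θ hθ ↦ ?_⟩, ?_, fun ω ↦ ?_⟩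
  · exact sqrt_le_sqrt <| smoothingSymbolSq_le_pi_div_two hα hω₀.le hω₁ <|
      cos_nonpos_of_pi_div_two_le_of_le hθ.1 (by linarith [hθ.2, pi_pos])
  · rw [smoothingSymbolSq_pi_div_two, sq_div_one_add_sq_eq, sqrt_sq_div_one_add_sq hα]
  · rw [← sqrt_sq_div_one_add_sq hα, smoothingSymbolSq_pi_div_two]
    exact sqrt_le_sqrt (sq_div_one_add_sq_le α ω)

theorem smoother_minmax_of_neg {α : ℝ} (hα : -1 ≤ α) (hα₀ : α < 0) :
    IsGreatest ((fun θ ↦ √(smoothingSymbolSq α 1 θ)) '' Icc (π / 2) π)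
        (√(smoothingSymbolSq α 1 π)) ∧
      √(smoothingSymbolSq α 1 π) = |α| ∧
      ∀ ω ≤ 1, |α| ≤ √(smoothingSymbolSq α ω π) := by
  refine ⟨⟨mem_image_of_mem _ pi_mem_Icc, forall_mem_image.2 fun θ _ ↦ ?_⟩, ?_, fun ω hω ↦ ?_⟩
  · simp only [smoothingSymbolSq_one, le_refl]
  · rw [smoothingSymbolSq_one, sqrt_sq_eq_abs]
  · rw [smoothingSymbolSq_pi, sqrt_sq_eq_abs, abs_of_neg hα₀]
    exact (neg_le_sub_sub_mul hα hω).trans (le_abs_self _)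

/-- Min-max principle for the smoothing symbol
`Ŝ(ω,α,θ) = √((1-ω)² + 2ω(1-ω)α cos θ + α²ω²)` with `α ≥ -1`:
the infimum over `ω ∈ (0,1]` of the supremum over `θ ∈ [π/2, π]` equals
`α/√(1+α²)` if `α ≥ 0` and `|α|` if `α < 0`, attained at
`ω* = 1/(1+α²), θ* = π/2` (resp. `ω* = 1, θ* = π`). -/
theorem smoother_minmax (α : ℝ) (hα : -1 ≤ α) :
    let S : ℝ → ℝ → ℝ := fun ω θ =>
      Real.sqrt ((1 - ω) ^ 2 + 2 * ω * (1 - ω) * α * Real.cos θ + α ^ 2 * ω ^ 2)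
    let ωstar : ℝ := if 0 ≤ α then 1 / (1 + α ^ 2) else 1
    let θstar : ℝ := if 0 ≤ α then π / 2 else π
    let v : ℝ := if 0 ≤ α then α / Real.sqrt (1 + α ^ 2) else |α|
    ωstar ∈ Set.Ioc (0 : ℝ) 1 ∧ θstar ∈ Set.Icc (π / 2) π ∧
    IsGreatest (S ωstar '' Set.Icc (π / 2) π) (S ωstar θstar) ∧
    S ωstar θstar = v ∧
    ∀ ω ∈ Set.Ioc (0 : ℝ) 1, ∃ θ ∈ Set.Icc (π / 2) π, v ≤ S ω θ := by
  intro S ωstar θstar v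
  by_cases h : 0 ≤ α
  · simp only [ωstar, θstar, v, if_pos h]
    obtain ⟨hmax, hval, hlower⟩ := smoother_minmax_of_nonneg h
    exact ⟨one_div_one_add_sq_mem_Ioc α, pi_div_two_mem_Icc, hmax, hval,
      fun ω _ ↦ ⟨π / 2, pi_div_two_mem_Icc, hlower ω⟩⟩
  · simp only [ωstar, θstar, v, if_neg h]
    obtain ⟨hmax, hval, hlower⟩ := smoother_minmax_of_neg hα (not_le.1 h)
    exact ⟨⟨one_pos, le_rfl⟩, pi_mem_Icc, hmax, hval, fun ω hω ↦ ⟨π, pi_mem_Icc, hlower ω hω.2⟩⟩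
end

section
/- With the periodic system matrix L̃ and block diagonal D = I_N ⊗ A (A invertible), one step of the damped block Jacobi iteration S̃ = I − ω D^{-1} L̃ maps the blockwise Fourier mode ψ with frequency θ_k to the mode with n-th block ((1−ω)I + e^{−iθ_k} ω A^{-1} B) ψ_n; consequently ν steps map ψ_n to ((1−ω)I + e^{−iθ_k} ω A^{-1}B)^ν ψ_n. -/
/-!
Write `L̃ = I ⊗ A + P ⊗ (-B)` and `D⁻¹ = I ⊗ A⁻¹`, where `P` is the cyclic shift. With
`z = e^{iθ}` we have `z ^ N = 1`, so the Fourier vector `e = (z ^ (n + 1))ₙ` satisfies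
`P e = z⁻¹ e = e^{-iθ} e`. Hence every matrix `I ⊗ X + P ⊗ Y` acts on `e ⊗ u` as
`e ⊗ (X + e^{-iθ} Y) u`, and one damped Jacobi step maps `e ⊗ u` to `e ⊗ S_loc u`. Since
`ψ = e ⊗ (U 𝟙)`, iterating gives the claim.
-/

open Matrix Complex Function

open scoped Kronecker

namespace Matrix

variable {R α β : Type*}

def kroneckerVec [Mul R] (e : α → R) (u : β → R) : α × β → R := fun p => e p.1 * u p.2

theorem kronecker_mulVec_kroneckerVec [CommSemiring R] {γ δ : Type*} [Fintype α] [Fintype β]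
    (P : Matrix γ α R) (X : Matrix δ β R) (e : α → R) (u : β → R) :
    (P ⊗ₖ X) *ᵥ kroneckerVec e u = kroneckerVec (P *ᵥ e) (X *ᵥ u) := by
  ext ⟨i, j⟩
  simp only [mulVec, dotProduct, kroneckerVec, kronecker_apply, Fintype.sum_prod_type,
    Finset.sum_mul_sum]
  exact Finset.sum_congr rfl fun _ _ => Finset.sum_congr rfl fun _ _ => by ring

theorem one_kronecker_add_kronecker_mulVec_kroneckerVec [CommSemiring R] [Fintype α]
    [DecidableEq α] [Fintype β] {P : Matrix α α R} {e : α → R} {c : R} (hPe : P *ᵥ e = c • e)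
    (X Y : Matrix β β R) (u : β → R) :
    (1 ⊗ₖ X + P ⊗ₖ Y) *ᵥ kroneckerVec e u = kroneckerVec e ((X + c • Y) *ᵥ u) := by
  ext ⟨i, j⟩
  simp only [add_mulVec, kronecker_mulVec_kroneckerVec, one_mulVec, hPe, smul_mulVec,
    Pi.add_apply, kroneckerVec, Pi.smul_apply, smul_eq_mul]
  ring

theorem dampedJacobi_step_kroneckerVec [CommRing R] [Fintype α] [DecidableEq α] [Fintype β]
    [DecidableEq β] {P : Matrix α α R} {e : α → R} {c : R} (hPe : P *ᵥ e = c • e)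
    {A : Matrix β β R} (hA : A⁻¹ * A = 1) (B : Matrix β β R) (ω : R) (u : β → R) :
    kroneckerVec e u - ω • (1 ⊗ₖ A⁻¹) *ᵥ ((1 ⊗ₖ A + P ⊗ₖ (-B)) *ᵥ kroneckerVec e u) =
      kroneckerVec e (((1 - ω) • 1 + (c * ω) • (A⁻¹ * B)) *ᵥ u) := by
  have hsymbol : (1 - ω) • 1 + (c * ω) • (A⁻¹ * B) = 1 - ω • (A⁻¹ * (A + c • -B)) := by
    rw [mul_add, hA, mul_smul_comm, mul_neg]
    module
  rw [one_kronecker_add_kronecker_mulVec_kroneckerVec hPe, kronecker_mulVec_kroneckerVec,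
    one_mulVec, mulVec_mulVec, hsymbol]
  ext ⟨i, j⟩
  simp only [Pi.sub_apply, kroneckerVec, Pi.smul_apply, smul_eq_mul, sub_mulVec, one_mulVec,
    smul_mulVec]
  ring

theorem iterate_mulVec [Semiring R] [Fintype β] [DecidableEq β] (M : Matrix β β R) (ν : ℕ)
    (u : β → R) : (M *ᵥ ·)^[ν] u = (M ^ ν) *ᵥ u := by
  induction ν with
  | zero => rw [iterate_zero_apply, pow_zero, one_mulVec]
  | succ ν ih => rw [iterate_succ_apply', ih, mulVec_mulVec, pow_succ']

/-- Ones at the positions `(t, t - 1 mod N)`; the paper's `Ũ_N` is `-cyclicShift R N`. -/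
def cyclicShift (R : Type*) [Zero R] [One R] (N : ℕ) : Matrix (Fin N) (Fin N) R :=
  Equiv.Perm.permMatrix R (finRotate N).symm

theorem val_finRotate : ∀ {N : ℕ} (s : Fin N), (finRotate N s : ℕ) = ((s : ℕ) + 1) % N
  | _ + 1, s => by simp [Fin.val_add]

theorem cyclicShift_apply [Zero R] [One R] {N : ℕ} (t s : Fin N) :
    cyclicShift R N t s = if (t : ℕ) = ((s : ℕ) + 1) % N then 1 else 0 := by
  rw [cyclicShift, Equiv.Perm.permMatrix, PEquiv.toMatrix_apply, Equiv.toPEquiv_apply]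
  simp only [Option.mem_def, Option.some_inj, Equiv.symm_apply_eq, Fin.ext_iff, val_finRotate]

theorem cyclicShift_mulVec_pow_succ [CommRing R] {N : ℕ} {z c : R} (hz : z ^ N = 1)
    (hcz : c * z = 1) :
    cyclicShift R N *ᵥ (fun t : Fin N => z ^ ((t : ℕ) + 1)) =
      c • fun t : Fin N => z ^ ((t : ℕ) + 1) := by
  ext t
  obtain ⟨s, rfl⟩ := (finRotate N).surjective t
  rw [cyclicShift, permMatrix_mulVec, Function.comp_apply, Equiv.symm_apply_apply,
    Pi.smul_apply, smul_eq_mul, val_finRotate, pow_succ' z (_ % N), ← mul_assoc, hcz, one_mul,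
    ← pow_eq_pow_mod _ hz]

end Matrix

theorem Complex.exp_I_mul_two_pi_int_div_pow_self (k : ℤ) (N : ℕ) :
    cexp (I * ((2 * k * Real.pi / N : ℝ) : ℂ)) ^ N = 1 := by
  rcases eq_or_ne N 0 with rfl | hN
  · exact pow_zero _
  rw [← Complex.exp_nat_mul, ← Complex.exp_int_mul_two_pi_mul_I k]
  push_cast
  field_simp

theorem jacobi_smoother_fourier_symbol_general (N m : ℕ) (ω : ℝ)
    (A B : Matrix (Fin m) (Fin m) ℝ) (hA : IsUnit A.det)
    (U : Matrix (Fin m) (Fin m) ℂ) (k : ℤ) :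
    let θ : ℝ := 2 * (k : ℝ) * Real.pi / N
    let Ac : Matrix (Fin m) (Fin m) ℂ := A.map (Complex.ofReal ·)
    let Bc : Matrix (Fin m) (Fin m) ℂ := B.map (Complex.ofReal ·)
    let L : Matrix (Fin N × Fin m) (Fin N × Fin m) ℂ := fun p q =>
      (if p.1 = q.1 then Ac p.2 q.2 else 0) +
      (if (p.1 : ℕ) = ((q.1 : ℕ) + 1) % N then -(Bc p.2 q.2) else 0)
    let Dinv : Matrix (Fin N × Fin m) (Fin N × Fin m) ℂ := fun p q =>
      if p.1 = q.1 then Ac⁻¹ p.2 q.2 else 0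
    let Sstep : (Fin N × Fin m → ℂ) → (Fin N × Fin m → ℂ) := fun v =>
      v - (ω : ℂ) • Dinv.mulVec (L.mulVec v)
    let Sloc : Matrix (Fin m) (Fin m) ℂ :=
      (1 - (ω : ℂ)) • (1 : Matrix (Fin m) (Fin m) ℂ) +
        (Complex.exp (-(Complex.I * θ)) * ω) • (Ac⁻¹ * Bc)
    let ψ : Fin N × Fin m → ℂ := fun p =>
      ∑ j : Fin m, U p.2 j * Complex.exp (Complex.I * ((p.1 : ℕ) + 1) * θ)
    ∀ (ν : ℕ) (n : Fin N) (ℓ : Fin m),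
      (Sstep^[ν] ψ) (n, ℓ) = ((Sloc ^ ν).mulVec (fun j => ψ (n, j))) ℓ := by
  intro θ Ac Bc L Dinv Sstep Sloc ψ ν n ℓ
  set z := cexp (I * θ)
  set e : Fin N → ℂ := fun t => z ^ ((t : ℕ) + 1)
  have hz : z ^ N = 1 := Complex.exp_I_mul_two_pi_int_div_pow_self k N
  have hcz : cexp (-(I * θ)) * z = 1 := by
    rw [← Complex.exp_add, neg_add_cancel, Complex.exp_zero]
  have hAc : Ac⁻¹ * Ac = 1 := by
    refine nonsing_inv_mul _ ?_
    rw [show Ac.det = (A.det : ℂ) from (RingHom.map_det Complex.ofRealHom A).symm]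
    exact hA.map Complex.ofRealHom
  have hL : L = 1 ⊗ₖ Ac + cyclicShift ℂ N ⊗ₖ (-Bc) := by
    ext ⟨t, i⟩ ⟨s, j⟩
    simp only [L, Matrix.add_apply, kroneckerMap_apply, one_apply, cyclicShift_apply, ite_mul,
      one_mul, zero_mul, Matrix.neg_apply, mul_neg, neg_ite, neg_zero]
  have hDinv : Dinv = 1 ⊗ₖ Ac⁻¹ := by
    ext ⟨t, i⟩ ⟨s, j⟩
    simp [Dinv, one_apply]
  have hψ : ψ = kroneckerVec e (fun i => ∑ j, U i j) := by
    ext ⟨t, i⟩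
    simp only [ψ, kroneckerVec, e, z, ← Complex.exp_nat_mul, Finset.mul_sum]
    refine Finset.sum_congr rfl fun j _ => ?_
    push_cast
    ring_nf
  have hstep : Semiconj (kroneckerVec e) (Sloc *ᵥ ·) Sstep := fun u => by
    simp only [Sstep, hL, hDinv]
    exact (dampedJacobi_step_kroneckerVec (cyclicShift_mulVec_pow_succ hz hcz) hAc Bc _ u).symm
  rw [hψ, ← hstep.iterate_right ν, iterate_mulVec]
  exact (congrFun (mulVec_smul _ (e n) _) ℓ).symm

/-- One step of the damped block Jacobi iteration `S̃ = I - ω D⁻¹ L̃` for the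
periodic system `L̃ = I_N ⊗ A + Ũ_N ⊗ B` with `D = I_N ⊗ A` (`A` invertible)
maps the blockwise Fourier mode `ψ` with frequency `θ_k = 2kπ/N` to the mode
with `n`-th block `((1-ω)I + e^{-iθ_k} ω A⁻¹B) ψ_n`; hence `ν` steps map `ψ_n`
to `((1-ω)I + e^{-iθ_k} ω A⁻¹B)^ν ψ_n`. -/
theorem jacobi_smoother_fourier_symbol (N m : ℕ) (hN : 0 < N) (ω : ℝ)
    (A B : Matrix (Fin m) (Fin m) ℝ) (hA : IsUnit A.det)
    (U : Matrix (Fin m) (Fin m) ℂ) (k : ℤ) :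
    let θ : ℝ := 2 * (k : ℝ) * Real.pi / N
    let Ac : Matrix (Fin m) (Fin m) ℂ := A.map (Complex.ofReal ·)
    let Bc : Matrix (Fin m) (Fin m) ℂ := B.map (Complex.ofReal ·)
    let L : Matrix (Fin N × Fin m) (Fin N × Fin m) ℂ := fun p q =>
      (if p.1 = q.1 then Ac p.2 q.2 else 0) +
      (if (p.1 : ℕ) = ((q.1 : ℕ) + 1) % N then -(Bc p.2 q.2) else 0)
    let Dinv : Matrix (Fin N × Fin m) (Fin N × Fin m) ℂ := fun p q =>
      if p.1 = q.1 then Ac⁻¹ p.2 q.2 else 0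
    let Sstep : (Fin N × Fin m → ℂ) → (Fin N × Fin m → ℂ) := fun v =>
      v - (ω : ℂ) • Dinv.mulVec (L.mulVec v)
    let Sloc : Matrix (Fin m) (Fin m) ℂ :=
      (1 - (ω : ℂ)) • (1 : Matrix (Fin m) (Fin m) ℂ) +
        (Complex.exp (-(Complex.I * θ)) * ω) • (Ac⁻¹ * Bc)
    let ψ : Fin N × Fin m → ℂ := fun p =>
      ∑ j : Fin m, U p.2 j * Complex.exp (Complex.I * ((p.1 : ℕ) + 1) * θ)
    ∀ (ν : ℕ) (n : Fin N) (ℓ : Fin m),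
      (Sstep^[ν] ψ) (n, ℓ) = ((Sloc ^ ν).mulVec (fun j => ψ (n, j))) ℓ :=
  jacobi_smoother_fourier_symbol_general N m ω A B hA U k
end

section
/- For θ ∈ ℝ and τ > 0 define ρ(θ, τ) := |(4(1+τ)² sin²θ + τ²(1 + 2τ − e^{2iθ})) / ((2 + τ(2+τ))² ((1+2τ)e^{2iθ} − 1))|. Then max over θ ∈ [−π/2, π/2] of ρ(θ, τ) is attained at θ = π/2 and equals 1/(2 + 2τ + τ²). -/
/-!
Put `c = cos 2θ`, `s = sin 2θ` and `K = 2 + 2τ + τ²`. The symbol is `N / (K² ((1+2τ)e^{2iθ} - 1))`,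
and `K² ‖(1+2τ)e^{2iθ} - 1‖² - ‖N‖²` is the polynomial
`((2(1+τ)² + τ²)² - τ⁴) s² + 4τ²(1+τ)(2+2τ+2τ²)(1+c)`,
which is nonnegative for `τ ≥ -1` and vanishes at `c = -1`, `s = 0`, i.e. at `θ = π/2`.
Hence `ρ(θ) ≤ 1/K` for every `θ`, with equality at `θ = π/2`.
-/

open Complex Real Set

noncomputable def twoGridSymbolRadius (τ θ : ℝ) : ℝ :=
  ‖(((4 * (1 + τ) ^ 2 * Real.sin θ ^ 2 : ℝ) : ℂ) +
        (τ : ℂ) ^ 2 * (1 + 2 * (τ : ℂ) - Complex.exp (2 * Complex.I * θ)))‖ /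
    ‖(((2 + τ * (2 + τ) : ℝ) : ℂ) ^ 2 *
        ((1 + 2 * (τ : ℂ)) * Complex.exp (2 * Complex.I * θ) - 1))‖

theorem sq_norm_twoGridSymbol_num (τ θ : ℝ) :
    ‖(((4 * (1 + τ) ^ 2 * Real.sin θ ^ 2 : ℝ) : ℂ) +
        (τ : ℂ) ^ 2 * (1 + 2 * (τ : ℂ) - Complex.exp (2 * Complex.I * θ)))‖ ^ 2 =
      (2 * (1 + τ) ^ 2 * (1 - Real.cos (2 * θ)) + τ ^ 2 * (1 + 2 * τ - Real.cos (2 * θ))) ^ 2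
        + τ ^ 4 * Real.sin (2 * θ) ^ 2 := by
  rw [Real.sin_sq_eq_half_sub, Complex.sq_norm, Complex.normSq_apply]
  simp only [add_re, add_im, mul_re, mul_im, ofReal_re, ofReal_im, sub_re, sub_im, one_re,
    one_im, exp_re, exp_im, I_re, I_im, pow_two, re_ofNat, im_ofNat, mul_zero, zero_mul, sub_zero,
    add_zero, mul_one, zero_add, Real.exp_zero, one_mul, zero_sub, sub_self]
  ring

theorem sq_norm_mul_exp_sub_one (a θ : ℝ) :
    ‖(a : ℂ) * Complex.exp (2 * Complex.I * θ) - 1‖ ^ 2 =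
      a ^ 2 + 1 - 2 * a * Real.cos (2 * θ) := by
  rw [Complex.sq_norm, Complex.normSq_apply]
  simp only [sub_re, sub_im, mul_re, mul_im, ofReal_re, ofReal_im, one_re, one_im, exp_re,
    exp_im, I_re, I_im, re_ofNat, im_ofNat, mul_zero, zero_mul, sub_zero, add_zero, mul_one,
    zero_add, Real.exp_zero, one_mul, sub_self]
  linear_combination a ^ 2 * Real.sin_sq_add_cos_sq (2 * θ)

theorem twoGridSymbol_num_sq_le {τ c s : ℝ} (hτ : -1 ≤ τ) (hc : -1 ≤ c)
    (hsc : s ^ 2 + c ^ 2 = 1) :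
    (2 * (1 + τ) ^ 2 * (1 - c) + τ ^ 2 * (1 + 2 * τ - c)) ^ 2 + τ ^ 4 * s ^ 2 ≤
      (2 + 2 * τ + τ ^ 2) ^ 2 * ((1 + 2 * τ) ^ 2 + 1 - 2 * (1 + 2 * τ) * c) := by
  have hX : 0 ≤ (2 * (1 + τ) ^ 2 + τ ^ 2) ^ 2 - τ ^ 4 := by
    nlinarith [sq_nonneg (1 + τ), sq_nonneg τ]
  have hY : 0 ≤ 4 * τ ^ 2 * (1 + τ) * (2 + 2 * τ + 2 * τ ^ 2) * (1 + c) := by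
    have : 0 < 2 + 2 * τ + 2 * τ ^ 2 := by nlinarith [sq_nonneg (τ + 1 / 2)]
    have : 0 ≤ 1 + τ := by linarith
    have : 0 ≤ 1 + c := by linarith
    positivity
  have hgap : (2 + 2 * τ + τ ^ 2) ^ 2 * ((1 + 2 * τ) ^ 2 + 1 - 2 * (1 + 2 * τ) * c) -
      ((2 * (1 + τ) ^ 2 * (1 - c) + τ ^ 2 * (1 + 2 * τ - c)) ^ 2 + τ ^ 4 * s ^ 2) =
      ((2 * (1 + τ) ^ 2 + τ ^ 2) ^ 2 - τ ^ 4) * s ^ 2 +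
        4 * τ ^ 2 * (1 + τ) * (2 + 2 * τ + 2 * τ ^ 2) * (1 + c) := by
    linear_combination (-(2 * (1 + τ) ^ 2 + τ ^ 2) ^ 2) * hsc
  linarith [mul_nonneg hX (sq_nonneg s)]

theorem twoGridSymbolRadius_le {τ : ℝ} (hτ : -1 ≤ τ) (θ : ℝ) :
    twoGridSymbolRadius τ θ ≤ 1 / (2 + 2 * τ + τ ^ 2) := by
  have hK : 0 < 2 + 2 * τ + τ ^ 2 := by nlinarith [sq_nonneg (1 + τ)]
  have hnum : ‖(((4 * (1 + τ) ^ 2 * Real.sin θ ^ 2 : ℝ) : ℂ) +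
        (τ : ℂ) ^ 2 * (1 + 2 * (τ : ℂ) - Complex.exp (2 * Complex.I * θ)))‖ ≤
      (2 + 2 * τ + τ ^ 2) * ‖(1 + 2 * (τ : ℂ)) * Complex.exp (2 * Complex.I * θ) - 1‖ := by
    refine le_of_sq_le_sq ?_ (by positivity)
    have hden := sq_norm_mul_exp_sub_one (1 + 2 * τ) θ
    push_cast at hden
    rw [mul_pow, sq_norm_twoGridSymbol_num, hden]
    exact twoGridSymbol_num_sq_le hτ (Real.neg_one_le_cos _) (Real.sin_sq_add_cos_sq _)
  unfold twoGridSymbolRadius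
  rw [norm_mul, norm_pow, Complex.norm_real, Real.norm_eq_abs, ← abs_pow,
    abs_of_nonneg (by positivity), show 2 + τ * (2 + τ) = 2 + 2 * τ + τ ^ 2 by ring]
  refine div_le_of_le_mul₀ (by positivity) (by positivity) ?_
  refine hnum.trans_eq ?_
  field_simp

theorem twoGridSymbolRadius_pi_div_two {τ : ℝ} (hτ : -1 < τ) :
    twoGridSymbolRadius τ (π / 2) = 1 / (2 + 2 * τ + τ ^ 2) := by
  have hexp : Complex.exp (2 * Complex.I * ((π / 2 : ℝ) : ℂ)) = -1 := by
    rw [show 2 * Complex.I * ((π / 2 : ℝ) : ℂ) = π * Complex.I by push_cast; ring]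
    exact Complex.exp_pi_mul_I
  have hnum : ((4 * (1 + τ) ^ 2 * Real.sin (π / 2) ^ 2 : ℝ) : ℂ) +
      (τ : ℂ) ^ 2 * (1 + 2 * (τ : ℂ) - Complex.exp (2 * Complex.I * ((π / 2 : ℝ) : ℂ))) =
      ((2 * (1 + τ) * (2 + 2 * τ + τ ^ 2) : ℝ) : ℂ) := by
    rw [hexp, Real.sin_pi_div_two]; push_cast; ring
  have hden : ((2 + τ * (2 + τ) : ℝ) : ℂ) ^ 2 *
      ((1 + 2 * (τ : ℂ)) * Complex.exp (2 * Complex.I * ((π / 2 : ℝ) : ℂ)) - 1) =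
      ((-(2 * (1 + τ) * (2 + 2 * τ + τ ^ 2) ^ 2) : ℝ) : ℂ) := by
    rw [hexp]; push_cast; ring
  have h1τ : 0 < 1 + τ := by linarith
  have hK : 0 < 2 + 2 * τ + τ ^ 2 := by nlinarith
  rw [twoGridSymbolRadius, hnum, hden, Complex.norm_real, Complex.norm_real, norm_neg,
    Real.norm_of_nonneg (by positivity), Real.norm_of_nonneg (by positivity)]
  field_simp

/-- The spectral radius of the two-grid Fourier symbol for backward Euler:
`ρ(θ,τ) = |(4(1+τ)² sin²θ + τ²(1+2τ-e^{2iθ})) / ((2+τ(2+τ))² ((1+2τ)e^{2iθ}-1))|`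
attains its maximum over `θ ∈ [-π/2, π/2]` at `θ = π/2`, with value
`1/(2+2τ+τ²)`. -/
theorem twogrid_convergence_factor (τ : ℝ) (hτ : 0 < τ) :
    let ρ : ℝ → ℝ := fun θ =>
      ‖(((4 * (1 + τ) ^ 2 * Real.sin θ ^ 2 : ℝ) : ℂ) +
            (τ : ℂ) ^ 2 * (1 + 2 * (τ : ℂ) - Complex.exp (2 * Complex.I * θ)))‖ /
      ‖(((2 + τ * (2 + τ) : ℝ) : ℂ) ^ 2 *
          ((1 + 2 * (τ : ℂ)) * Complex.exp (2 * Complex.I * θ) - 1))‖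
    IsGreatest (ρ '' Set.Icc (-(π / 2)) (π / 2)) (ρ (π / 2)) ∧
    ρ (π / 2) = 1 / (2 + 2 * τ + τ ^ 2) := by
  intro ρ
  show IsGreatest (twoGridSymbolRadius τ '' _) (twoGridSymbolRadius τ (π / 2)) ∧
    twoGridSymbolRadius τ (π / 2) = _
  have hval := twoGridSymbolRadius_pi_div_two (τ := τ) (by linarith)
  refine ⟨⟨mem_image_of_mem _ ⟨by linarith [Real.pi_pos], le_rfl⟩, ?_⟩, hval⟩
  rintro _ ⟨θ, -, rfl⟩
  rw [hval]
  exact twoGridSymbolRadius_le (by linarith) θ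
end

section
/- Let R(z) = (1 + z/3)/(1 − 2z/3 + z²/6) be the stability function of the 2-stage RADAU IA scheme (the (1,2) subdiagonal Padé approximant of e^z). Then |R(z)| < 1 for all z ∈ ℂ with Re(z) < 0. -/
/-!
With `x = Re z`, the squared moduli of the denominator and numerator of `R` differ by
`(|z|⁴ - 8x|z|² + 24x² - 72x) / 36`, a sum of nonnegative terms with `-72x > 0` when `x < 0`.
-/

open Complex

namespace RadauIA

theorem normSq_den_sub_normSq_num (z : ℂ) :
    normSq (1 - 2 * z / 3 + z ^ 2 / 6) - normSq (1 + z / 3) =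
      (normSq z ^ 2 - 8 * z.re * normSq z + 24 * z.re ^ 2 - 72 * z.re) / 36 := by
  simp only [normSq_apply, add_re, add_im, sub_re, sub_im, mul_re, mul_im, div_re, div_im,
    pow_two, one_re, one_im, re_ofNat, im_ofNat]
  ring

theorem norm_numerator_lt_norm_denominator {z : ℂ} (hz : z.re < 0) :
    ‖1 + z / 3‖ < ‖1 - 2 * z / 3 + z ^ 2 / 6‖ := by
  have hgap : 0 < normSq (1 - 2 * z / 3 + z ^ 2 / 6) - normSq (1 + z / 3) := by
    rw [normSq_den_sub_normSq_num]
    nlinarith [mul_nonneg (normSq_nonneg z) (neg_nonneg.mpr hz.le)]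
  rw [← sq_lt_sq₀ (norm_nonneg _) (norm_nonneg _), ← normSq_eq_norm_sq, ← normSq_eq_norm_sq]
  linarith

end RadauIA

/-- A-stability of the 2-stage RADAU IA scheme: its stability function
`R(z) = (1 + z/3)/(1 - 2z/3 + z²/6)`, the `(1,2)` subdiagonal Padé approximant
of `e^z`, satisfies `|R(z)| < 1` on the open left half plane. -/
theorem radauIA_two_stage_A_stable (z : ℂ) (hz : z.re < 0) :
    ‖(1 + z / 3) / (1 - 2 * z / 3 + z ^ 2 / 6)‖ < 1 := by
  have hlt := RadauIA.norm_numerator_lt_norm_denominator hz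
  rw [norm_div, div_lt_one ((norm_nonneg _).trans_lt hlt)]
  exact hlt
end
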